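/- arXiv:1812.07559 — 2 statements merged into one kernel-verified Lean document; each statement's English description precedes it below -/
import Mathlib

section
/- Let G be a finitely generated group such that the non-abelian tensor square [G,G^φ] ≤ ν(G) is finite. Then G is finite, and the derived subgroup G' is finite of order at most |[G,G^φ]|. -/
open Monoid
open scoped commutatorElement

/-- A pair of compatible (right) actions of groups `G` and `H` on each other,
in the sense of Brown–Loday.  `aGH g h` denotes `g ^ h` and `aHG h g` denotes `h ^ g`. -/
structure CompatibleActions (G H : Type*) [Group G] [Group H] where
  aGH : G → H → G
  aHG : H → G → H
  aGH_one : ∀ g, aGH g 1 = g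
  aGH_mul : ∀ g h₁ h₂, aGH g (h₁ * h₂) = aGH (aGH g h₁) h₂
  aGH_hom : ∀ g₁ g₂ h, aGH (g₁ * g₂) h = aGH g₁ h * aGH g₂ h
  aHG_one : ∀ h, aHG h 1 = h
  aHG_mul : ∀ h g₁ g₂, aHG h (g₁ * g₂) = aHG (aHG h g₁) g₂
  aHG_hom : ∀ h₁ h₂ g, aHG (h₁ * h₂) g = aHG h₁ g * aHG h₂ g
  compat₁ : ∀ g g₁ h, aGH g (aHG h g₁) = g₁⁻¹ * aGH (g₁ * g * g₁⁻¹) h * g₁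
  compat₂ : ∀ h h₁ g, aHG h (aGH g h₁) = h₁⁻¹ * aHG (h₁ * h * h₁⁻¹) g * h₁

variable {G H : Type*} [Group G] [Group H]

/-- Relators of the group `η(G,H)`:
`[g,h^φ]^{g₁} = [g^{g₁}, (h^{g₁})^φ]` and `[g,h^φ]^{h₁^φ} = [g^{h₁}, (h^{h₁})^φ]`. -/
def etaRels (c : CompatibleActions G H) : Set (Coprod G H) :=
  let iG : G →* Coprod G H := Coprod.inl
  let iH : H →* Coprod G H := Coprod.inr
  (Set.range fun p : G × G × H =>
    ((iG p.1)⁻¹ * ⁅iG p.2.1, iH p.2.2⁆ * iG p.1) *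
      ⁅iG (p.1⁻¹ * p.2.1 * p.1), iH (c.aHG p.2.2 p.1)⁆⁻¹) ∪
  (Set.range fun p : H × G × H =>
    ((iH p.1)⁻¹ * ⁅iG p.2.1, iH p.2.2⁆ * iH p.1) *
      ⁅iG (c.aGH p.2.1 p.1), iH (p.1⁻¹ * p.2.2 * p.1)⁆⁻¹)

/-- The Brown–Loday group `η(G,H)`. -/
def EtaGroup (c : CompatibleActions G H) : Type _ :=
  Coprod G H ⧸ Subgroup.normalClosure (etaRels c)

instance (c : CompatibleActions G H) : Group (EtaGroup c) :=
  QuotientGroup.Quotient.group _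

/-- The canonical map `G → η(G,H)`. -/
def etaG (c : CompatibleActions G H) : G →* EtaGroup c :=
  (QuotientGroup.mk' _).comp Coprod.inl

/-- The canonical map `H → η(G,H)`, `h ↦ h^φ`. -/
def etaH (c : CompatibleActions G H) : H →* EtaGroup c :=
  (QuotientGroup.mk' _).comp Coprod.inr

/-- The set of tensors `T⊗(G,H) = {[g, h^φ]} ⊆ η(G,H)`. -/
def tensorSet (c : CompatibleActions G H) : Set (EtaGroup c) :=
  {x | ∃ g h, x = ⁅etaG c g, etaH c h⁆}

/-- The non-abelian tensor product `[G, H^φ] ≤ η(G,H)`. -/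
def tensorSub (c : CompatibleActions G H) : Subgroup (EtaGroup c) :=
  Subgroup.closure (tensorSet c)

/-- The compatible pair of conjugation actions of `G` on itself, giving `ν(G) = η(G,G)`. -/
def conjActions (G : Type*) [Group G] : CompatibleActions G G where
  aGH g h := h⁻¹ * g * h
  aHG h g := g⁻¹ * h * g
  aGH_one := by intro g; group
  aGH_mul := by intros; group
  aGH_hom := by intros; group
  aHG_one := by intro h; group
  aHG_mul := by intros; group
  aHG_hom := by intros; group
  compat₁ := by intros; group
  compat₂ := by intros; group

/-- `ν(G)`. -/
abbrev NuGroup (G : Type*) [Group G] := EtaGroup (conjActions G)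

/-- A group is locally finite if all its finitely generated subgroups are finite. -/
def IsLocallyFiniteGroup (K : Type*) [Group K] : Prop :=
  ∀ S : Subgroup K, S.FG → Finite S

section AuxiliaryDefs

/-! ### The discrete Heisenberg group -/

/-- The discrete Heisenberg group: a central extension of `ℤ × ℤ` by `ℤ`. -/
@[ext] structure Heis where
  a : ℤ
  b : ℤ
  c : ℤ

namespace Heis

instance : Mul Heis := ⟨fun x y => ⟨x.a + y.a + x.b * y.c, x.b + y.b, x.c + y.c⟩⟩
instance : One Heis := ⟨⟨0, 0, 0⟩⟩
instance : Inv Heis := ⟨fun x => ⟨-x.a + x.b * x.c, -x.b, -x.c⟩⟩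

@[simp] lemma mul_a (x y : Heis) : (x * y).a = x.a + y.a + x.b * y.c := rfl
@[simp] lemma mul_b (x y : Heis) : (x * y).b = x.b + y.b := rfl
@[simp] lemma mul_c (x y : Heis) : (x * y).c = x.c + y.c := rfl
@[simp] lemma one_a : (1 : Heis).a = 0 := rfl
@[simp] lemma one_b : (1 : Heis).b = 0 := rfl
@[simp] lemma one_c : (1 : Heis).c = 0 := rfl
@[simp] lemma inv_a (x : Heis) : (x⁻¹).a = -x.a + x.b * x.c := rfl
@[simp] lemma inv_b (x : Heis) : (x⁻¹).b = -x.b := rfl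
@[simp] lemma inv_c (x : Heis) : (x⁻¹).c = -x.c := rfl

instance : Group Heis where
  mul_assoc x y z := by ext <;> simp <;> ring
  one_mul x := by ext <;> simp
  mul_one x := by ext <;> simp
  inv_mul_cancel x := by ext <;> simp <;> ring

end Heis

variable {G : Type*} [Group G]

section Phi

variable (φ : G → ℤ)

lemma phi_one (hφ : ∀ a b : G, φ (a * b) = φ a + φ b) : φ 1 = 0 := by
  have h := hφ 1 1; rw [one_mul] at h; omega

lemma phi_inv (hφ : ∀ a b : G, φ (a * b) = φ a + φ b) (x : G) : φ x⁻¹ = -φ x := by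
  have h := hφ x⁻¹ x; rw [inv_mul_cancel, phi_one φ hφ] at h; omega

variable (hφ : ∀ a b : G, φ (a * b) = φ a + φ b)

/-- `g ↦ (0, φ g, 0)` into the Heisenberg group. -/
def heisL : G →* Heis where
  toFun g := ⟨0, φ g, 0⟩
  map_one' := by ext <;> simp [phi_one φ hφ]
  map_mul' x y := by ext <;> simp [hφ]

/-- `g ↦ (0, 0, φ g)` into the Heisenberg group. -/
def heisR : G →* Heis where
  toFun g := ⟨0, 0, φ g⟩
  map_one' := by ext <;> simp [phi_one φ hφ]
  map_mul' x y := by ext <;> simp [hφ]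

@[simp] lemma heisL_apply (g : G) : heisL φ hφ g = ⟨0, φ g, 0⟩ := rfl
@[simp] lemma heisR_apply (g : G) : heisR φ hφ g = ⟨0, 0, φ g⟩ := rfl

end Phi

/-! ### The retraction `ν(G) → G` -/

/-- The canonical retraction `ν(G) → G` sending `g ↦ g` and `g^φ ↦ g`. -/
def nuToG : NuGroup G →* G :=
  QuotientGroup.lift _ (Coprod.lift (MonoidHom.id G) (MonoidHom.id G)) (by
    intro x hx
    refine MonoidHom.mem_ker.mp (Subgroup.normalClosure_le_normal ?_ hx)
    rintro y hy
    simp only [etaRels, Set.mem_union, Set.mem_range, Prod.exists] at hy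
    obtain ⟨g1, g, k, rfl⟩ | ⟨k1, g, k, rfl⟩ := hy <;>
      · simp only [SetLike.mem_coe, MonoidHom.mem_ker, conjActions, commutatorElement_def,
          map_mul, map_inv, Coprod.lift_apply_inl, Coprod.lift_apply_inr, MonoidHom.id_apply]
        group)

@[simp] lemma nuToG_etaG (g : G) : nuToG (etaG (conjActions G) g) = g := by
  rfl

@[simp] lemma nuToG_etaH (g : G) : nuToG (etaH (conjActions G) g) = g := by
  rfl

lemma map_tensorSub : (tensorSub (conjActions G)).map nuToG = commutator G := by
  rw [tensorSub, MonoidHom.map_closure, commutator_eq_closure]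
  congr 1
  ext x
  constructor
  · rintro ⟨y, ⟨g, k, rfl⟩, rfl⟩
    exact ⟨g, k, by simp [map_commutatorElement]⟩
  · rintro ⟨g, k, rfl⟩
    exact ⟨⁅etaG (conjActions G) g, etaH (conjActions G) k⁆, ⟨g, k, rfl⟩,
      by simp [map_commutatorElement]⟩

/-! ### The map `ν(G) → Heis` induced by an additive character -/

/-- The homomorphism `ν(G) → Heis` induced by an additive character `φ : G → ℤ`. -/
def nuToHeis (φ : G → ℤ) (hφ : ∀ a b : G, φ (a * b) = φ a + φ b) : NuGroup G →* Heis :=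
  QuotientGroup.lift _ (Coprod.lift (heisL φ hφ) (heisR φ hφ)) (by
    intro x hx
    refine MonoidHom.mem_ker.mp (Subgroup.normalClosure_le_normal ?_ hx)
    rintro y hy
    simp only [etaRels, Set.mem_union, Set.mem_range, Prod.exists] at hy
    obtain ⟨g1, g, k, rfl⟩ | ⟨k1, g, k, rfl⟩ := hy <;>
      · simp only [SetLike.mem_coe, MonoidHom.mem_ker, conjActions, commutatorElement_def,
          map_mul, map_inv, Coprod.lift_apply_inl, Coprod.lift_apply_inr, heisL_apply,
          heisR_apply]
        ext <;> simp [hφ, phi_inv φ hφ, phi_one φ hφ] <;> ring)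

@[simp] lemma nuToHeis_etaG (φ : G → ℤ) (hφ : ∀ a b : G, φ (a * b) = φ a + φ b) (g : G) :
    nuToHeis φ hφ (etaG (conjActions G) g) = ⟨0, φ g, 0⟩ := by
  rfl

@[simp] lemma nuToHeis_etaH (φ : G → ℤ) (hφ : ∀ a b : G, φ (a * b) = φ a + φ b) (g : G) :
    nuToHeis φ hφ (etaH (conjActions G) g) = ⟨0, 0, φ g⟩ := by
  rfl

/-- `z ↦ (z, 0, 0)` as a homomorphism `ℤ → Heis`. -/
def heisZ : Multiplicative ℤ →* Heis where
  toFun z := ⟨Multiplicative.toAdd z, 0, 0⟩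
  map_one' := by ext <;> simp
  map_mul' x y := by ext <;> simp

lemma heisC_zpow (n : ℤ) : (⟨1, 0, 0⟩ : Heis) ^ n = ⟨n, 0, 0⟩ := by
  have h1 : (⟨1, 0, 0⟩ : Heis) = heisZ (Multiplicative.ofAdd 1) := rfl
  rw [h1, ← map_zpow]
  show (⟨Multiplicative.toAdd (Multiplicative.ofAdd (1:ℤ) ^ n), 0, 0⟩ : Heis) = _
  rw [toAdd_zpow]
  norm_num

lemma not_finite_tensorSub (φ : G → ℤ) (hφ : ∀ a b : G, φ (a * b) = φ a + φ b)
    (g0 : G) (hg0 : φ g0 = 1) : ¬ Finite (tensorSub (conjActions G)) := by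
  intro hfin
  set x : NuGroup G := ⁅etaG (conjActions G) g0, etaH (conjActions G) g0⁆ with hxdef
  have hx : x ∈ tensorSub (conjActions G) := Subgroup.subset_closure ⟨g0, g0, rfl⟩
  have hθx : nuToHeis φ hφ x = ⟨1, 0, 0⟩ := by
    rw [hxdef, map_commutatorElement, nuToHeis_etaG, nuToHeis_etaH, commutatorElement_def]
    ext <;> simp [hg0]
  have key : ∀ n : ℤ, nuToHeis φ hφ (x ^ n) = ⟨n, 0, 0⟩ := fun n => by
    rw [map_zpow, hθx, heisC_zpow]
  obtain ⟨m, n, hmn, hEq⟩ := Finite.exists_ne_map_eq_of_infinite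
    (fun n : ℤ => (⟨x ^ n, Subgroup.zpow_mem _ hx n⟩ : tensorSub (conjActions G)))
  apply hmn
  have h2 : x ^ m = x ^ n := congrArg Subtype.val hEq
  have h3 := congrArg (nuToHeis φ hφ) h2
  rw [key, key] at h3
  exact congrArg Heis.a h3

lemma abelianization_finite_of_tensorSub_finite [Group.FG G]
    (h : Finite (tensorSub (conjActions G))) : Finite (Abelianization G) := by
  have hfg : Group.FG (Abelianization G) := QuotientGroup.fg (commutator G)
  have : AddGroup.FG (Additive (Abelianization G)) := GroupFG.iff_add_fg.mp hfg
  obtain ⟨n, ι, fι, p, hp, e, ⟨eqv⟩⟩ :=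
    AddCommGroup.equiv_free_prod_directSum_zmod (Additive (Abelianization G))
  rcases Nat.eq_zero_or_pos n with hn | hn
  · subst hn
    have hne : ∀ i, NeZero (p i ^ e i) := fun i => ⟨pow_ne_zero _ (hp i).pos.ne'⟩
    have h1 : Finite (Fin 0 →₀ ℤ) := Finite.of_equiv _ Finsupp.equivFunOnFinite.symm
    haveI : ∀ i, Fintype (ZMod (p i ^ e i)) := fun i => @ZMod.fintype _ (hne i)
    have h2 : Finite (DirectSum ι fun i => ZMod (p i ^ e i)) := by
      classical
      have : Finite (Π₀ i : ι, ZMod (p i ^ e i)) := Finite.of_fintype _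
      exact Finite.of_equiv _
        (Equiv.refl ((Π₀ i : ι, ZMod (p i ^ e i)) : Type))
    have h3 : Finite ((Fin 0 →₀ ℤ) × DirectSum ι fun i => ZMod (p i ^ e i)) := by
      infer_instance
    exact Finite.of_equiv _ eqv.toEquiv.symm
  · exfalso
    set i0 : Fin n := ⟨0, hn⟩
    set φ : G → ℤ := fun g => (eqv (Additive.ofMul (Abelianization.of g))).1 i0 with hφdef
    have hφ : ∀ a b : G, φ (a * b) = φ a + φ b := by
      intro a b
      simp only [hφdef, map_mul, ofMul_mul, map_add, Prod.fst_add, Finsupp.add_apply]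
    set z : Additive (Abelianization G) := eqv.symm (Finsupp.single i0 1, 0) with hz
    obtain ⟨g0, hg0⟩ := QuotientGroup.mk_surjective (Additive.toMul z)
    have hφg0 : φ g0 = 1 := by
      have h1 : Additive.ofMul (Abelianization.of g0) = z := by
        rw [show Abelianization.of g0 = Additive.toMul z from hg0]; rfl
      simp only [hφdef, h1, hz, AddEquiv.apply_symm_apply]
      simp
    exact absurd h (not_finite_tensorSub φ hφ g0 hφg0)

end AuxiliaryDefs


/-- If `G` is finitely generated and `[G,G^φ]` is finite, then `G` is finite and
`G'` is finite of order at most `|[G,G^φ]|`. -/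
theorem finite_of_tensorSquare_finite {G : Type*} [Group G] [Group.FG G]
    (h : Finite (tensorSub (conjActions G))) :
    Finite G ∧ Finite (commutator G) ∧
      Nat.card (commutator G) ≤ Nat.card (tensorSub (conjActions G)) := by
  have hmap := map_tensorSub (G := G)
  have hfinC : Finite (commutator G) := by
    rw [← hmap]
    exact Finite.of_surjective _ (nuToG.subgroupMap_surjective (tensorSub (conjActions G)))
  have hcard : Nat.card (commutator G) ≤ Nat.card (tensorSub (conjActions G)) := by
    rw [← hmap]
    exact Nat.card_le_card_of_surjective _
      (nuToG.subgroupMap_surjective (tensorSub (conjActions G)))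
  have hab : Finite (Abelianization G) := abelianization_finite_of_tensorSub_finite h
  have hq : Finite (G ⧸ commutator G) := hab
  have hG : Finite G :=
    Finite.of_equiv _ (Subgroup.groupEquivQuotientProdSubgroup (s := commutator G)).symm
  exact ⟨hG, hfinC, hcard⟩
end

section
/- Let G be a polycyclic-by-finite group. If the non-abelian tensor square [G,G^φ] ≤ ν(G) is periodic, then G is finite. -/
open Monoid
open scoped commutatorElement

variable {G H : Type*} [Group G] [Group H]

/-- A group is polycyclic-by-finite if it has a normal subgroup of finite index which is
polycyclic (equivalently: solvable with all subgroups finitely generated). -/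
def IsPolycyclicByFinite (G : Type*) [Group G] : Prop :=
  ∃ N : Subgroup G, N.Normal ∧ N.FiniteIndex ∧ IsSolvable N ∧ ∀ S : Subgroup N, S.FG

/-!
The fold map `ν(G) → G`, `g, g^φ ↦ g`, sends `[g, h^φ]` to `[g, h]`, so `G'` is periodic. A
homomorphism `f : G → ℤ` induces `ν(G) → Heis(ℤ)`, `g ↦ (f g, 0, 0)`, `g^φ ↦ (0, f g, 0)`, which
sends `[g, g^φ]` to the central element `(0, 0, (f g)²)` of infinite order unless `f g = 0`; so
`G` has no nontrivial homomorphism to `ℤ`. As `G` is finitely generated, `G/G'` is then finite,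
hence `G` is periodic. Finally a periodic polycyclic group is finite: along its derived series
every factor is a finitely generated periodic abelian group.
-/

theorem Group.fg_of_fg_of_finiteIndex {K : Subgroup G} (hK : K.FG) [K.FiniteIndex] :
    Group.FG G := by
  let reps : Set G := Set.range fun q : G ⧸ K => q.out
  have hreps : (Subgroup.closure reps).FG :=
    (Subgroup.fg_iff _).mpr ⟨reps, rfl, Set.finite_range _⟩
  have hsup : K ⊔ Subgroup.closure reps = ⊤ := by
    refine eq_top_iff.mpr fun g _ => ?_
    have hout : (g : G ⧸ K).out ∈ Subgroup.closure reps := Subgroup.subset_closure ⟨_, rfl⟩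
    have hrest : (g : G ⧸ K).out⁻¹ * g ∈ K := by
      rw [← QuotientGroup.eq, QuotientGroup.out_eq']
    simpa using mul_mem (Subgroup.mem_sup_right hout) (Subgroup.mem_sup_left hrest)
  exact Group.fg_def.mpr (hsup ▸ hK.sup hreps)

theorem AddCommGroup.isAddTorsion_of_forall_addMonoidHom_int_eq_zero {A : Type*}
    [AddCommGroup A] [AddGroup.FG A] (h : ∀ f : A →+ ℤ, f = 0) : IsAddTorsion A := by
  intro x
  let π := (QuotientAddGroup.mk' (torsion A)).toIntLinearMap
  have hx : π x = 0 := (Module.forall_dual_apply_eq_zero_iff ℤ (π x)).mp fun φ =>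
    DFunLike.congr_fun (h (φ.toAddMonoidHom.comp π.toAddMonoidHom)) x
  exact (QuotientAddGroup.eq_zero_iff x).mp hx

theorem Abelianization.of_surjective : Function.Surjective (Abelianization.of (G := G)) :=
  QuotientGroup.mk'_surjective _

theorem Abelianization.finite_of_forall_monoidHom_int_eq_one [Group.FG G]
    (h : ∀ f : G →* Multiplicative ℤ, f = 1) : Finite (Abelianization G) := by
  have : Group.FG (Abelianization G) := Group.fg_of_surjective Abelianization.of_surjective
  refine CommGroup.finite_of_fg_isMulTorsion _ fun x => ?_
  refine AddCommGroup.isAddTorsion_of_forall_addMonoidHom_int_eq_zero (A := Additive _)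
    (fun f => ?_) (Additive.ofMul x)
  have hf := h ((AddMonoidHom.toMultiplicativeRight f).comp Abelianization.of)
  ext g
  simpa using DFunLike.congr_fun hf g

theorem finite_of_isMulTorsion_of_finite_commutator [Group.FG G] (hG : IsMulTorsion G)
    [Finite (commutator G)] : Finite G :=
  have : Group.FG (Abelianization G) := Group.fg_of_surjective Abelianization.of_surjective
  have : Finite (Abelianization G) := CommGroup.finite_of_fg_isMulTorsion _
    (hG.of_surjective Abelianization.of_surjective)
  have : Finite (G ⧸ commutator G) := this
  Finite.of_subgroup_quotient (commutator G)

theorem finite_derivedSeries_of_finite_succ (hfg : ∀ S : Subgroup G, S.FG) (hG : IsMulTorsion G)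
    (n : ℕ) [Finite (derivedSeries G (n + 1))] : Finite (derivedSeries G n) := by
  set D := derivedSeries G n
  have : Group.FG D := (Group.fg_iff_subgroup_fg D).mpr (hfg D)
  have : Finite ((commutator D).map D.subtype) := by
    rwa [Subgroup.map_subtype_commutator]
  have : Finite (commutator D) :=
    .of_equiv _ (Subgroup.equivMapOfInjective _ _ D.subtype_injective).symm.toEquiv
  exact finite_of_isMulTorsion_of_finite_commutator (hG.subgroup D)

theorem Group.IsSolvable.finite_of_forall_fg_of_isMulTorsion [Group.IsSolvable G]
    (hfg : ∀ S : Subgroup G, S.FG) (hG : IsMulTorsion G) : Finite G := by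
  obtain ⟨n, hn⟩ := Group.IsSolvable.solvable (G := G)
  have hbot : Finite (derivedSeries G n) := by rw [hn]; infer_instance
  have htop : Finite (derivedSeries G 0) :=
    Nat.decreasingInduction (motive := fun m _ => Finite (derivedSeries G m))
      (fun m _ _ => finite_derivedSeries_of_finite_succ hfg hG m) hbot n.zero_le
  rw [derivedSeries_zero] at htop
  exact .of_equiv _ Subgroup.topEquiv.toEquiv

@[ext]
structure Heisenberg (R : Type*) where
  a : R
  b : R
  c : R

namespace Heisenberg

variable {R : Type*} [CommRing R]

-- the upper unitriangular matrix `[[1, a, c], [0, 1, b], [0, 0, 1]]`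
instance : Mul (Heisenberg R) := ⟨fun x y => ⟨x.a + y.a, x.b + y.b, x.c + y.c + x.a * y.b⟩⟩
instance : One (Heisenberg R) := ⟨⟨0, 0, 0⟩⟩
instance : Inv (Heisenberg R) := ⟨fun x => ⟨-x.a, -x.b, x.a * x.b - x.c⟩⟩

@[simp] lemma mul_a (x y : Heisenberg R) : (x * y).a = x.a + y.a := rfl
@[simp] lemma mul_b (x y : Heisenberg R) : (x * y).b = x.b + y.b := rfl
@[simp] lemma mul_c (x y : Heisenberg R) : (x * y).c = x.c + y.c + x.a * y.b := rfl
@[simp] lemma one_a : (1 : Heisenberg R).a = 0 := rfl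
@[simp] lemma one_b : (1 : Heisenberg R).b = 0 := rfl
@[simp] lemma one_c : (1 : Heisenberg R).c = 0 := rfl
@[simp] lemma inv_a (x : Heisenberg R) : x⁻¹.a = -x.a := rfl
@[simp] lemma inv_b (x : Heisenberg R) : x⁻¹.b = -x.b := rfl
@[simp] lemma inv_c (x : Heisenberg R) : x⁻¹.c = x.a * x.b - x.c := rfl

instance : Group (Heisenberg R) where
  mul_assoc x y z := by ext <;> simp <;> ring
  one_mul x := by ext <;> simp
  mul_one x := by ext <;> simp
  inv_mul_cancel x := by ext <;> simp

def ofA : Multiplicative R →* Heisenberg R where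
  toFun r := ⟨r.toAdd, 0, 0⟩
  map_one' := rfl
  map_mul' x y := by ext <;> simp

def ofB : Multiplicative R →* Heisenberg R where
  toFun r := ⟨0, r.toAdd, 0⟩
  map_one' := rfl
  map_mul' x y := by ext <;> simp

def ofC : Multiplicative R →* Heisenberg R where
  toFun r := ⟨0, 0, r.toAdd⟩
  map_one' := rfl
  map_mul' x y := by ext <;> simp

lemma ofC_injective : Function.Injective (ofC (R := R)) :=
  fun _ _ h => congrArg Heisenberg.c h

lemma commutatorElement_ofA_ofB (r s : Multiplicative R) :
    ⁅ofA r, ofB s⁆ = ofC (.ofAdd (r.toAdd * s.toAdd)) := by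
  ext <;> simp [ofA, ofB, ofC, commutatorElement_def]

end Heisenberg

section Nu

variable {K : Type*} [Group K]

def nuLift (fG fH : G →* K)
    (hG : ∀ x g h, (fG x)⁻¹ * ⁅fG g, fH h⁆ * fG x = ⁅fG (x⁻¹ * g * x), fH (x⁻¹ * h * x)⁆)
    (hH : ∀ x g h, (fH x)⁻¹ * ⁅fG g, fH h⁆ * fH x = ⁅fG (x⁻¹ * g * x), fH (x⁻¹ * h * x)⁆) :
    NuGroup G →* K :=
  QuotientGroup.lift _ (Coprod.lift fG fH) <| Subgroup.normalClosure_le_normal <| by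
    rintro r (⟨⟨x, g, h⟩, rfl⟩ | ⟨⟨x, g, h⟩, rfl⟩)
    all_goals
      simp only [SetLike.mem_coe, MonoidHom.mem_ker, map_mul, map_inv, map_commutatorElement,
        Coprod.lift_apply_inl, Coprod.lift_apply_inr, mul_inv_eq_one]
    · simpa [conjActions] using hG x g h
    · simpa [conjActions] using hH x g h

@[simp]
lemma nuLift_commutatorElement (fG fH : G →* K) (hG hH) (g h : G) :
    nuLift fG fH hG hH ⁅etaG (conjActions G) g, etaH (conjActions G) h⁆ = ⁅fG g, fH h⁆ := by
  rw [map_commutatorElement]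
  rfl

def nuFold : NuGroup G →* G :=
  nuLift (.id G) (.id G) (by intros; simp only [MonoidHom.id_apply]; group)
    (by intros; simp only [MonoidHom.id_apply]; group)

lemma commutator_le_map_nuFold_tensorSub :
    commutator G ≤ (tensorSub (conjActions G)).map nuFold := by
  rw [commutator_eq_closure, Subgroup.closure_le]
  rintro _ ⟨g, h, rfl⟩
  exact ⟨_, Subgroup.subset_closure ⟨g, h, rfl⟩, nuLift_commutatorElement ..⟩

lemma isMulTorsion_commutator_of_tensorSub_periodic
    (hper : ∀ x ∈ tensorSub (conjActions G), IsOfFinOrder x) : IsMulTorsion (commutator G) := by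
  rintro ⟨x, hx⟩
  obtain ⟨y, hy, rfl⟩ := commutator_le_map_nuFold_tensorSub hx
  exact (Subgroup.subtype_injective _).isOfFinOrder_iff.mp (nuFold.isOfFinOrder (hper y hy))

def nuToHeisenberg {R : Type*} [CommRing R] (f : G →* Multiplicative R) :
    NuGroup G →* Heisenberg R :=
  nuLift (Heisenberg.ofA.comp f) (Heisenberg.ofB.comp f)
    (by intros; ext <;> simp [Heisenberg.ofA, Heisenberg.ofB, commutatorElement_def])
    (by intros; ext <;> simp [Heisenberg.ofA, Heisenberg.ofB, commutatorElement_def])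

lemma monoidHom_int_eq_one_of_tensorSub_periodic
    (hper : ∀ x ∈ tensorSub (conjActions G), IsOfFinOrder x) (f : G →* Multiplicative ℤ) :
    f = 1 := by
  ext g
  have hg := (nuToHeisenberg f).isOfFinOrder (hper _ (Subgroup.subset_closure ⟨g, g, rfl⟩))
  rw [nuToHeisenberg, nuLift_commutatorElement, MonoidHom.comp_apply, MonoidHom.comp_apply,
    Heisenberg.commutatorElement_ofA_ofB, Heisenberg.ofC_injective.isOfFinOrder_iff,
    isOfFinOrder_iff_eq_one, ofAdd_eq_one, mul_self_eq_zero] at hg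
  exact hg

end Nu

/-- If `G` is polycyclic-by-finite and `[G,G^φ]` is periodic, then `G` is finite. -/
theorem finite_of_polycyclicByFinite_of_tensorSquare_periodic {G : Type*} [Group G]
    (h : IsPolycyclicByFinite G)
    (hper : ∀ x ∈ tensorSub (conjActions G), IsOfFinOrder x) : Finite G := by
  obtain ⟨N, -, _, hNsolv, hNfg⟩ := h
  have : Group.FG G :=
    Group.fg_of_fg_of_finiteIndex (K := N) ((Group.fg_iff_subgroup_fg N).mp ⟨hNfg ⊤⟩)
  have : Finite (Abelianization G) := Abelianization.finite_of_forall_monoidHom_int_eq_one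
    (monoidHom_int_eq_one_of_tensorSub_periodic hper)
  have hG : IsMulTorsion G := IsMulTorsion.extension_closed (Abelianization.ker_of G).symm
    isMulTorsion_of_finite (isMulTorsion_commutator_of_tensorSub_periodic hper)
  have : Finite N := hNsolv.finite_of_forall_fg_of_isMulTorsion hNfg (hG.subgroup N)
  exact Finite.of_subgroup_quotient N
end
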